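/- The partial transpose of a Hermitian 4×4 matrix ρ (indexed by the product basis of ℂ²⊗ℂ²) has the same trace as ρ, and if ρ is positive semidefinite then every eigenvalue of ρ^{T_A} lies in the interval [−1/2, 1]. -/

import Mathlib

open Matrix ComplexOrder

/-- Partial transpose on the first qubit. -/
def ptA (ρ : Matrix (Fin 2 × Fin 2) (Fin 2 × Fin 2) ℂ) :
    Matrix (Fin 2 × Fin 2) (Fin 2 × Fin 2) ℂ :=
  fun p q => ρ (q.1, p.2) (p.1, q.2)

namespace PTAux
open Complex Finset


lemma cs {n : ℕ} (a b : Fin n → ℂ) :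
    normSq (∑ i, a i * b i) ≤ (∑ i, normSq (a i)) * (∑ i, normSq (b i)) := by
  have h1 : ‖(∑ i, a i * b i)‖ ≤ ∑ i, ‖(a i)‖ * ‖(b i)‖ := by
    refine le_trans (norm_sum_le _ _) (le_of_eq ?_)
    simp [_root_.map_mul]
  have h2 := Finset.sum_mul_sq_le_sq_mul_sq Finset.univ (fun i => ‖(a i)‖)
      (fun i => ‖(b i)‖)
  calc normSq (∑ i, a i * b i) = (‖(∑ i, a i * b i)‖)^2 := (Complex.sq_norm _).symm
    _ ≤ (∑ i, ‖(a i)‖ * ‖(b i)‖)^2 := by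
        exact pow_le_pow_left₀ (norm_nonneg _) h1 2
    _ ≤ (∑ i, ‖(a i)‖^2) * (∑ i, ‖(b i)‖^2) := h2
    _ = _ := by simp [Complex.sq_norm]

lemma keyQ (ψ v : Fin 2 × Fin 2 → ℂ)
    (hψ : ∑ p, normSq (ψ p) = 1) (hv : ∑ p, normSq (v p) = 1) :
    -(1/2 : ℝ) ≤ (∑ p, ∑ q, (starRingEnd ℂ) (v p) * ψ (q.1, p.2) *
        (starRingEnd ℂ) (ψ (p.1, q.2)) * v q).re ∧
      (∑ p, ∑ q, (starRingEnd ℂ) (v p) * ψ (q.1, p.2) *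
        (starRingEnd ℂ) (ψ (p.1, q.2)) * v q).re ≤ 1 := by
  set C00 : ℂ := ψ (0,0) * v (0,0) + ψ (1,0) * v (1,0) with hC00
  set C01 : ℂ := ψ (0,0) * v (0,1) + ψ (1,0) * v (1,1) with hC01
  set C10 : ℂ := ψ (0,1) * v (0,0) + ψ (1,1) * v (1,0) with hC10
  set C11 : ℂ := ψ (0,1) * v (0,1) + ψ (1,1) * v (1,1) with hC11
  have hid : (∑ p, ∑ q, (starRingEnd ℂ) (v p) * ψ (q.1, p.2) *
        (starRingEnd ℂ) (ψ (p.1, q.2)) * v q)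
      = ((normSq C00 + normSq C01 + normSq C10 + normSq C11 - normSq (C01 - C10) : ℝ) : ℂ) := by
    have mc : ∀ z : ℂ, ((normSq z : ℝ) : ℂ) = z * (starRingEnd ℂ) z :=
      fun z => (Complex.mul_conj z).symm
    push_cast
    rw [mc, mc, mc, mc, mc]
    simp only [Fintype.sum_prod_type, Fin.sum_univ_two, hC00, hC01, hC10, hC11,
      map_add, map_sub, _root_.map_mul]
    ring
  rw [hid, Complex.ofReal_re]
  set P0 : ℝ := normSq (ψ (0,0)) + normSq (ψ (1,0)) with hP0
  set P1 : ℝ := normSq (ψ (0,1)) + normSq (ψ (1,1)) with hP1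
  set V0 : ℝ := normSq (v (0,0)) + normSq (v (1,0)) with hV0
  set V1 : ℝ := normSq (v (0,1)) + normSq (v (1,1)) with hV1
  have b00 : normSq C00 ≤ P0 * V0 := by
    simpa [Fin.sum_univ_two, hP0, hV0] using cs ![ψ (0,0), ψ (1,0)] ![v (0,0), v (1,0)]
  have b01 : normSq C01 ≤ P0 * V1 := by
    simpa [Fin.sum_univ_two, hP0, hV1] using cs ![ψ (0,0), ψ (1,0)] ![v (0,1), v (1,1)]
  have b10 : normSq C10 ≤ P1 * V0 := by
    simpa [Fin.sum_univ_two, hP1, hV0] using cs ![ψ (0,1), ψ (1,1)] ![v (0,0), v (1,0)]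
  have b11 : normSq C11 ≤ P1 * V1 := by
    simpa [Fin.sum_univ_two, hP1, hV1] using cs ![ψ (0,1), ψ (1,1)] ![v (0,1), v (1,1)]
  have hψ' : P0 + P1 = 1 := by
    rw [← hψ]; simp only [Fintype.sum_prod_type, Fin.sum_univ_two, hP0, hP1]; ring
  have hv' : V0 + V1 = 1 := by
    rw [← hv]; simp only [Fintype.sum_prod_type, Fin.sum_univ_two, hV0, hV1]; ring
  have h1 : 0 ≤ P0 := add_nonneg (normSq_nonneg _) (normSq_nonneg _)
  have h2 : 0 ≤ P1 := add_nonneg (normSq_nonneg _) (normSq_nonneg _)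
  have h3 : 0 ≤ V0 := add_nonneg (normSq_nonneg _) (normSq_nonneg _)
  have h4 : 0 ≤ V1 := add_nonneg (normSq_nonneg _) (normSq_nonneg _)
  have hD : normSq (C01 - C10) ≤ 1 := by
    have hcs := cs ![ψ (0,0), ψ (1,0), -ψ (0,1), -ψ (1,1)] ![v (0,1), v (1,1), v (0,0), v (1,0)]
    simp only [Fin.sum_univ_four, Matrix.cons_val_zero, Matrix.cons_val_one, Matrix.head_cons,
      Matrix.cons_val_two, Matrix.tail_cons, Matrix.cons_val_three, normSq_neg, neg_mul] at hcs
    have e : C01 - C10 = ψ (0,0) * v (0,1) + ψ (1,0) * v (1,1) + -(ψ (0,1) * v (0,0)) + -(ψ (1,1) * v (1,0)) := by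
      rw [hC01, hC10]; ring
    rw [e]
    calc _ ≤ _ := hcs
      _ = (P0 + P1) * (V1 + V0) := by rw [hP0, hP1, hV0, hV1]; ring
      _ ≤ 1 := by rw [hψ']; nlinarith
  have hpar : normSq (C01 - C10) ≤ 2 * normSq C01 + 2 * normSq C10 := by
    have hpe : normSq (C01 - C10) + normSq (C01 + C10) = 2 * normSq C01 + 2 * normSq C10 := by
      simp only [normSq_apply, Complex.sub_re, Complex.sub_im, Complex.add_re, Complex.add_im]
      ring
    nlinarith [normSq_nonneg (C01 + C10)]
  have hA1 : normSq C00 + normSq C01 + normSq C10 + normSq C11 ≤ 1 := by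
    calc normSq C00 + normSq C01 + normSq C10 + normSq C11
        ≤ P0 * V0 + P0 * V1 + P1 * V0 + P1 * V1 := by linarith
      _ = (P0 + P1) * (V0 + V1) := by ring
      _ = 1 := by rw [hψ', hv', one_mul]
  constructor
  · linarith [normSq_nonneg C00, normSq_nonneg C11]
  · linarith [normSq_nonneg (C01 - C10)]


lemma sum_normSq_of_norm_one {n : Type*} [Fintype n] (x : EuclideanSpace ℂ n) (h : ‖x‖ = 1) :
    ∑ p, normSq (x p) = 1 := by
  have h2 : ‖x‖ ^ 2 = ∑ p, ‖x p‖ ^ 2 := by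
    rw [EuclideanSpace.norm_eq, Real.sq_sqrt (by positivity)]
  have h3 : ∀ p, normSq (x p) = ‖x p‖ ^ 2 := fun p => by
    rw [Complex.sq_norm]
  simp_rw [h3]
  rw [← h2, h, one_pow]

open Complex Finset in
lemma main_wiring
    (ρ : Matrix (Fin 2 × Fin 2) (Fin 2 × Fin 2) ℂ) (hherm : ρ.IsHermitian)
    (hpsd : ρ.PosSemidef) (htr : ρ.trace = 1)
    (hH : (ptA ρ).IsHermitian) (i : Fin 2 × Fin 2)
    :
    -(1 / 2) ≤ hH.eigenvalues i ∧ hH.eigenvalues i ≤ 1 := by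
  classical
  set U : Matrix (Fin 2 × Fin 2) (Fin 2 × Fin 2) ℂ := (hherm.eigenvectorUnitary : Matrix (Fin 2 × Fin 2) (Fin 2 × Fin 2) ℂ) with hUdef
  set μ : Fin 2 × Fin 2 → ℝ := hherm.eigenvalues with hμdef
  set v : Fin 2 × Fin 2 → ℂ := ⇑(hH.eigenvectorBasis i) with hvdef
  have hent : ∀ a b, ρ a b = ∑ m, (μ m : ℂ) * (U a m * (starRingEnd ℂ) (U b m)) := by
    intro a b
    conv_lhs => rw [hherm.spectral_theorem, Unitary.conjStarAlgAut_apply]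
    rw [Matrix.mul_apply]
    refine Finset.sum_congr rfl fun m _ => ?_
    rw [Matrix.mul_diagonal]
    simp only [Matrix.star_apply, Function.comp_apply, RCLike.star_def, hUdef, hμdef]
    exact (fun (x y z : ℂ) => by ring : ∀ x y z : ℂ, x * y * z = y * (x * z)) _ _ _
  have hcol : ∀ m, ∑ a, normSq (U a m) = 1 := by
    intro m
    have he : ∀ a, U a m = (hherm.eigenvectorBasis m) a := fun a =>
      hherm.eigenvectorUnitary_apply a m
    simp_rw [he]
    exact sum_normSq_of_norm_one _ (hherm.eigenvectorBasis.orthonormal.1 m)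
  have hvnorm : ∑ p, normSq (v p) = 1 :=
    sum_normSq_of_norm_one _ (hH.eigenvectorBasis.orthonormal.1 i)
  have hμnn : ∀ m, 0 ≤ μ m := fun m => hpsd.eigenvalues_nonneg m
  have hμsum : ∑ m, μ m = 1 := by
    have h1 : ρ.trace = ∑ m, (μ m : ℂ) := by
      conv_lhs => rw [hherm.spectral_theorem, Unitary.conjStarAlgAut_apply]
      rw [Matrix.trace_mul_cycle,
        show (star (hherm.eigenvectorUnitary : Matrix (Fin 2 × Fin 2) (Fin 2 × Fin 2) ℂ)) *
            (hherm.eigenvectorUnitary : Matrix (Fin 2 × Fin 2) (Fin 2 × Fin 2) ℂ) = 1 from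
          (Matrix.mem_unitaryGroup_iff').mp hherm.eigenvectorUnitary.2,
        one_mul, Matrix.trace_diagonal]
      simp [hμdef]
    rw [htr] at h1
    exact_mod_cast h1.symm
  have hdot : star v ⬝ᵥ ((ptA ρ) *ᵥ v)
      = ∑ m, (μ m : ℂ) * (∑ p, ∑ q, (starRingEnd ℂ) (v p) * U (q.1, p.2) m *
          (starRingEnd ℂ) (U (p.1, q.2) m) * v q) := by
    have e1 : star v ⬝ᵥ ((ptA ρ) *ᵥ v)
        = ∑ p, ∑ q, ∑ m, (μ m : ℂ) * ((starRingEnd ℂ) (v p) * U (q.1, p.2) m *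
            (starRingEnd ℂ) (U (p.1, q.2) m) * v q) := by
      simp only [dotProduct, mulVec, dotProduct, Finset.mul_sum, Pi.star_apply]
      refine Finset.sum_congr rfl fun p _ => Finset.sum_congr rfl fun q _ => ?_
      rw [show ptA ρ p q = ρ (q.1, p.2) (p.1, q.2) from rfl, hent, Finset.sum_mul,
        Finset.mul_sum]
      refine Finset.sum_congr rfl fun m _ => ?_
      simp only [RCLike.star_def]
      ring
    calc _ = _ := e1
      _ = ∑ p : Fin 2 × Fin 2, ∑ m : Fin 2 × Fin 2, ∑ q : Fin 2 × Fin 2,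
            (μ m : ℂ) * ((starRingEnd ℂ) (v p) * U (q.1, p.2) m *
              (starRingEnd ℂ) (U (p.1, q.2) m) * v q) :=
        Finset.sum_congr rfl fun p _ => Finset.sum_comm
      _ = ∑ m : Fin 2 × Fin 2, ∑ p : Fin 2 × Fin 2, ∑ q : Fin 2 × Fin 2,
            (μ m : ℂ) * ((starRingEnd ℂ) (v p) * U (q.1, p.2) m *
              (starRingEnd ℂ) (U (p.1, q.2) m) * v q) := Finset.sum_comm
      _ = _ := by
        refine Finset.sum_congr rfl fun m _ => ?_
        rw [Finset.mul_sum]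
        exact Finset.sum_congr rfl fun p _ => by rw [Finset.mul_sum]
  have heig := hH.eigenvalues_eq i
  rw [← hvdef] at heig
  rw [hdot] at heig
  have hre : hH.eigenvalues i = ∑ m, μ m * (∑ p, ∑ q, (starRingEnd ℂ) (v p) * U (q.1, p.2) m *
      (starRingEnd ℂ) (U (p.1, q.2) m) * v q).re := by
    rw [heig]
    simp [RCLike.re_to_complex, Complex.re_sum, Complex.mul_re, Complex.ofReal_re,
      Complex.ofReal_im]
  have hbnd : ∀ m, -(1/2 : ℝ) ≤ (∑ p, ∑ q, (starRingEnd ℂ) (v p) * U (q.1, p.2) m *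
      (starRingEnd ℂ) (U (p.1, q.2) m) * v q).re ∧
      (∑ p, ∑ q, (starRingEnd ℂ) (v p) * U (q.1, p.2) m *
      (starRingEnd ℂ) (U (p.1, q.2) m) * v q).re ≤ 1 :=
    fun m => keyQ (fun a => U a m) v (hcol m) hvnorm
  constructor
  · rw [hre]
    calc -(1/2 : ℝ) = ∑ m : Fin 2 × Fin 2, μ m * (-(1/2)) := by
          rw [← Finset.sum_mul, hμsum, one_mul]
      _ ≤ _ := Finset.sum_le_sum fun m _ =>
          mul_le_mul_of_nonneg_left (hbnd m).1 (hμnn m)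
  · rw [hre]
    calc _ ≤ ∑ m : Fin 2 × Fin 2, μ m * 1 := Finset.sum_le_sum fun m _ =>
          mul_le_mul_of_nonneg_left (hbnd m).2 (hμnn m)
      _ = 1 := by rw [← Finset.sum_mul, hμsum, one_mul]

end PTAux

/-- The partial transpose of a two-qubit density matrix has the same trace as the
original matrix, and all its eigenvalues lie in `[−1/2, 1]`. -/
theorem partial_transpose_trace_and_eigenvalue_bounds
    (ρ : Matrix (Fin 2 × Fin 2) (Fin 2 × Fin 2) ℂ) (hherm : ρ.IsHermitian) :
    (ptA ρ).trace = ρ.trace ∧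
    (ρ.PosSemidef → ρ.trace = 1 →
      ∀ (hH : (ptA ρ).IsHermitian) (i : Fin 2 × Fin 2),
        -(1 / 2) ≤ hH.eigenvalues i ∧ hH.eigenvalues i ≤ 1) := by
  constructor
  · simp [Matrix.trace, ptA, Matrix.diag]
  · intro hpsd htr hH i
    exact PTAux.main_wiring ρ hherm hpsd htr hH i
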